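/- Let A ∈ ℂ^{m×n×p} and W ∈ ℂ^{n×m×p} with rank_M(W *_M A) = rank_M(W) ≤ rank_M(A), and let X be an outer inverse of A with R_M(X) = R_M(W) and N_M(X) = N_M(W). Let γ ∈ ℂ and define Z₀ = γ·W and Z_{j+1} = Z_j *_M Σ_{k=0}^{18} (I_M − A *_M Z_j)^k (the hyperpower iteration of order 19). If ‖mat(A *_M X − A *_M Z₀)‖_F < 1, then for every j ≥ 0, ‖mat(X − Z_j)‖_F ≤ ‖mat(X)‖_F · ‖mat(A *_M X − A *_M Z₀)‖_F^{19^j}; in particular the sequence Z_j converges entrywise to X. -/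

import Mathlib

open Matrix Finset

/-- A third-order tensor in `ℂ^{m×n×p}`, given by its `p` frontal slices. -/
abbrev Tensor (m n p : ℕ) := Fin p → Matrix (Fin m) (Fin n) ℂ

/-- The transform `Â = A ×₃ M` (mode-3 product with `M`). -/
noncomputable def hatT {m n p : ℕ} (M : Matrix (Fin p) (Fin p) ℂ) (A : Tensor m n p) :
    Tensor m n p :=
  fun l => ∑ s, M l s • A s

/-- `mat(A)`: the block-diagonal matrix whose blocks are frontal slices of `A ×₃ M`. -/
noncomputable def matT {m n p : ℕ} (M : Matrix (Fin p) (Fin p) ℂ) (A : Tensor m n p) :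
    Matrix (Fin m × Fin p) (Fin n × Fin p) ℂ :=
  Matrix.blockDiagonal (hatT M A)

/-- The M-product `A *_M B`, determined by `mat(A *_M B) = mat(A)·mat(B)`. -/
noncomputable def mprod {m n k p : ℕ} (M : Matrix (Fin p) (Fin p) ℂ)
    (A : Tensor m n p) (B : Tensor n k p) : Tensor m k p :=
  fun l => ∑ s, M⁻¹ l s • (hatT M A s * hatT M B s)

/-- The conjugate transpose `A^*`, determined by `mat(A^*) = mat(A)^*`. -/
noncomputable def mstar {m n p : ℕ} (M : Matrix (Fin p) (Fin p) ℂ) (A : Tensor m n p) :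
    Tensor n m p :=
  fun l => ∑ s, M⁻¹ l s • (hatT M A s)ᴴ

/-- The identity tensor `I_M ∈ ℂ^{m×m×p}`, determined by `mat(I_M) = I`. -/
noncomputable def idT {p : ℕ} (M : Matrix (Fin p) (Fin p) ℂ) (m : ℕ) : Tensor m m p :=
  fun l => ∑ s, M⁻¹ l s • (1 : Matrix (Fin m) (Fin m) ℂ)

/-- M-product powers of a square tensor. -/
noncomputable def mpow {m p : ℕ} (M : Matrix (Fin p) (Fin p) ℂ) (A : Tensor m m p) :
    ℕ → Tensor m m p
  | 0 => idT M m
  | k + 1 => mprod M A (mpow M A k)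

/-- `R_M(A)`: the column space of `mat(A)`. -/
noncomputable def rangeM {m n p : ℕ} (M : Matrix (Fin p) (Fin p) ℂ) (A : Tensor m n p) :
    Submodule ℂ (Fin m × Fin p → ℂ) :=
  LinearMap.range (matT M A).mulVecLin

/-- `N_M(A)`: the kernel of `mat(A)`. -/
noncomputable def kerM {m n p : ℕ} (M : Matrix (Fin p) (Fin p) ℂ) (A : Tensor m n p) :
    Submodule ℂ (Fin n × Fin p → ℂ) :=
  LinearMap.ker (matT M A).mulVecLin

/-- `rank_M(A) = rank(mat(A))`. -/
noncomputable def rankM {m n p : ℕ} (M : Matrix (Fin p) (Fin p) ℂ) (A : Tensor m n p) : ℕ :=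
  (matT M A).rank

/-- The first `s` lateral slices `Q(:,1:s,:)`. -/
def latSlice {n s p : ℕ} (hsn : s ≤ n) (Q : Tensor n n p) : Tensor n s p :=
  fun l => (Q l).submatrix id (Fin.castLE hsn)

/-- The first `s` horizontal slices `R(1:s,:,:)`. -/
def horSlice {n m s p : ℕ} (hsn : s ≤ n) (R : Tensor n m p) : Tensor s m p :=
  fun l => (R l).submatrix (Fin.castLE hsn) id

/-- Frobenius norm of a complex matrix. -/
noncomputable def frobNorm {α β : Type*} [Fintype α] [Fintype β] (X : Matrix α β ℂ) : ℝ :=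
  Real.sqrt (∑ i, ∑ j, ‖X i j‖ ^ 2)

/-! The M-product is transported to the matrix product by `mat` (up to the invertible transform
`A ↦ A ×₃ M`), so it suffices to study the hyperpower iteration for matrices. Write `P = A X` and
`E_j = A X − A Z_j`. If `Z₀` lies in the corner `X A Z₀ = Z₀ = Z₀ A X`, so does every iterate, and
then `1 − A Z_j = (1 − P) + E_j` is a sum of two mutually annihilating terms with `1 − P`
idempotent; hence one step of order `N` gives `E_{j+1} = E_j ^ N`. Finally `X − Z_j = X E_j`, and
the range and kernel conditions on `X` are exactly what puts `Z₀ = γ W` in the corner. -/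

theorem add_pow_of_mul_eq_zero {R : Type*} [Semiring R] {a b : R} (hab : a * b = 0)
    (hba : b * a = 0) {n : ℕ} (hn : n ≠ 0) : (a + b) ^ n = a ^ n + b ^ n := by
  induction n with
  | zero => contradiction
  | succ k ih =>
    rcases eq_or_ne k 0 with rfl | hk
    · simp
    obtain ⟨i, rfl⟩ := Nat.exists_eq_add_one_of_ne_zero hk
    have hab' : a ^ (i + 1) * b = 0 := by rw [pow_succ, mul_assoc, hab, mul_zero]
    have hba' : b ^ (i + 1) * a = 0 := by rw [pow_succ, mul_assoc, hba, mul_zero]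
    rw [pow_succ, ih hk, add_mul, mul_add, mul_add, hab', hba', ← pow_succ, ← pow_succ,
      add_zero, zero_add]

theorem one_sub_pow_eq_of_isIdempotentElem {R : Type*} [Ring R] {P T : R}
    (hP : IsIdempotentElem P) (hPT : P * T = T) (hTP : T * P = T) {N : ℕ} (hN : N ≠ 0) :
    (1 - T) ^ N = (1 - P) + (P - T) ^ N := by
  have h₁ : (1 - P) * (P - T) = 0 := by
    rw [sub_mul, one_mul, mul_sub, hP.eq, hPT, sub_self]
  have h₂ : (P - T) * (1 - P) = 0 := by
    rw [sub_mul, mul_sub, mul_sub, mul_one, mul_one, hP.eq, hTP, sub_self, sub_self, sub_zero]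
  rw [← sub_add_sub_cancel 1 P T, add_pow_of_mul_eq_zero h₁ h₂ hN, hP.one_sub.pow_eq hN]

namespace Matrix

section Hyperpower

variable {R : Type*} [Ring R] {m n : Type*} [Fintype m] [Fintype n] [DecidableEq m]

def hyperpowerStep (N : ℕ) (A : Matrix m n R) (Z : Matrix n m R) : Matrix n m R :=
  Z * ∑ k ∈ Finset.range N, (1 - A * Z) ^ k

theorem mul_one_sub_mul_pow [DecidableEq n] (A : Matrix m n R) (Z : Matrix n m R) (k : ℕ) :
    Z * (1 - A * Z) ^ k = (1 - Z * A) ^ k * Z := by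
  induction k with
  | zero => simp
  | succ k ih =>
    rw [pow_succ, ← Matrix.mul_assoc, ih, pow_succ, Matrix.mul_assoc, Matrix.mul_assoc,
      Matrix.mul_sub, Matrix.sub_mul, Matrix.mul_one, Matrix.one_mul, Matrix.mul_assoc]

theorem hyperpowerStep_eq_sum_mul [DecidableEq n] (N : ℕ) (A : Matrix m n R)
    (Z : Matrix n m R) :
    hyperpowerStep N A Z = (∑ k ∈ Finset.range N, (1 - Z * A) ^ k) * Z := by
  simp only [hyperpowerStep, Matrix.mul_sum, Matrix.sum_mul, mul_one_sub_mul_pow]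

theorem mul_hyperpowerStep (N : ℕ) (A : Matrix m n R) (Z : Matrix n m R) :
    A * hyperpowerStep N A Z = 1 - (1 - A * Z) ^ N := by
  rw [hyperpowerStep, ← Matrix.mul_assoc, ← mul_neg_geom_sum, sub_sub_cancel]

variable {N : ℕ} {A : Matrix m n R} {X Z : Matrix n m R}

theorem mul_mul_hyperpowerStep (hXZ : X * A * Z = Z) :
    X * A * hyperpowerStep N A Z = hyperpowerStep N A Z := by
  rw [hyperpowerStep, ← Matrix.mul_assoc, hXZ]

theorem hyperpowerStep_mul_mul [DecidableEq n] (hZX : Z * A * X = Z) :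
    hyperpowerStep N A Z * A * X = hyperpowerStep N A Z := by
  rw [hyperpowerStep_eq_sum_mul, Matrix.mul_assoc, Matrix.mul_assoc, ← Matrix.mul_assoc Z,
    hZX]

theorem sub_mul_hyperpowerStep (hN : N ≠ 0) (hX : X * A * X = X) (hXZ : X * A * Z = Z)
    (hZX : Z * A * X = Z) :
    A * X - A * hyperpowerStep N A Z = (A * X - A * Z) ^ N := by
  have hP : IsIdempotentElem (A * X) := by
    rw [IsIdempotentElem, Matrix.mul_assoc, ← Matrix.mul_assoc X, hX]
  have hPT : A * X * (A * Z) = A * Z := by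
    rw [Matrix.mul_assoc, ← Matrix.mul_assoc X, hXZ]
  have hTP : A * Z * (A * X) = A * Z := by
    rw [Matrix.mul_assoc, ← Matrix.mul_assoc Z, hZX]
  rw [mul_hyperpowerStep, one_sub_pow_eq_of_isIdempotentElem hP hPT hTP hN]
  abel

theorem sub_hyperpower_eq [DecidableEq n] {Z : ℕ → Matrix n m R} (hN : N ≠ 0)
    (hX : X * A * X = X) (hXZ : X * A * Z 0 = Z 0) (hZX : Z 0 * A * X = Z 0)
    (hZ : ∀ j, Z (j + 1) = hyperpowerStep N A (Z j)) (j : ℕ) :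
    X - Z j = X * (A * X - A * Z 0) ^ (N ^ j) := by
  have hcorner : ∀ j, X * A * Z j = Z j ∧ Z j * A * X = Z j := by
    intro j
    induction j with
    | zero => exact ⟨hXZ, hZX⟩
    | succ j ih => rw [hZ]; exact ⟨mul_mul_hyperpowerStep ih.1, hyperpowerStep_mul_mul ih.2⟩
  have herr : ∀ j, A * X - A * Z j = (A * X - A * Z 0) ^ (N ^ j) := by
    intro j
    induction j with
    | zero => rw [pow_zero, pow_one]
    | succ j ih =>
      rw [hZ, sub_mul_hyperpowerStep hN hX (hcorner j).1 (hcorner j).2, ih, ← pow_mul,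
        pow_succ]
  rw [← herr, Matrix.mul_sub, ← Matrix.mul_assoc, ← Matrix.mul_assoc, hX, (hcorner j).1]

end Hyperpower

section RangeKernel

variable {K : Type*} [CommRing K] {k m n : Type*} [Fintype m] [Fintype n]
  {X : Matrix n m K} {A : Matrix m n K}

theorem mul_mul_eq_of_range_le [Fintype k] {W : Matrix n k K} (hX : X * A * X = X)
    (h : LinearMap.range W.mulVecLin ≤ LinearMap.range X.mulVecLin) : X * A * W = W := by
  refine ext_iff_mulVec.2 fun v => ?_
  obtain ⟨u, hu⟩ := h ⟨v, rfl⟩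
  simp only [mulVecLin_apply] at hu
  rw [← mulVec_mulVec, ← hu, mulVec_mulVec, hX]

theorem mul_mul_eq_of_ker_le {W : Matrix k m K} (hX : X * A * X = X)
    (h : LinearMap.ker X.mulVecLin ≤ LinearMap.ker W.mulVecLin) : W * A * X = W := by
  refine ext_iff_mulVec.2 fun v => ?_
  have hv : (A * X) *ᵥ v - v ∈ LinearMap.ker X.mulVecLin := by
    rw [LinearMap.mem_ker, mulVecLin_apply, mulVec_sub, mulVec_mulVec, ← Matrix.mul_assoc, hX,
      sub_self]
  have hWv := h hv
  rw [LinearMap.mem_ker, mulVecLin_apply, mulVec_sub, sub_eq_zero, mulVec_mulVec] at hWv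
  rw [Matrix.mul_assoc, hWv]

end RangeKernel

end Matrix

theorem sum_smul_sum_smul_of_mul_eq_one {R V ι : Type*} [Semiring R] [AddCommMonoid V]
    [Module R V] [Fintype ι] [DecidableEq ι] {P Q : Matrix ι ι R} (h : P * Q = 1)
    (f : ι → V) (l : ι) : ∑ s, P l s • ∑ t, Q s t • f t = f l := by
  simp_rw [Finset.smul_sum, smul_smul]
  rw [Finset.sum_comm]
  simp_rw [← Finset.sum_smul, ← Matrix.mul_apply, h, Matrix.one_apply, ite_smul, one_smul,
    zero_smul, Finset.sum_ite_eq, Finset.mem_univ, if_true]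

section Tensor

variable {m n k p : ℕ} {M : Matrix (Fin p) (Fin p) ℂ}

variable (M) in
noncomputable def matTₗ : Tensor m n p →ₗ[ℂ] Matrix (Fin m × Fin p) (Fin n × Fin p) ℂ where
  toFun := matT M
  map_add' A B := by
    rw [matT, matT, matT, ← blockDiagonal_add]
    congr 1
    funext l
    simp only [hatT, Pi.add_apply, smul_add, Finset.sum_add_distrib]
  map_smul' c A := by
    rw [matT, matT, RingHom.id_apply, ← blockDiagonal_smul]
    congr 1
    funext l
    simp only [hatT, Pi.smul_apply, smul_comm c, Finset.smul_sum]

theorem matT_sub (A B : Tensor m n p) : matT M (A - B) = matT M A - matT M B :=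
  map_sub (matTₗ M) A B

theorem matT_smul (c : ℂ) (A : Tensor m n p) : matT M (c • A) = c • matT M A :=
  map_smul (matTₗ M) c A

theorem matT_sum {ι : Type*} (s : Finset ι) (F : ι → Tensor m n p) :
    matT M (∑ i ∈ s, F i) = ∑ i ∈ s, matT M (F i) :=
  map_sum (matTₗ M) F s

variable (hM : IsUnit M.det)
include hM

theorem matT_mprod (A : Tensor m n p) (B : Tensor n k p) :
    matT M (mprod M A B) = matT M A * matT M B := by
  rw [matT, matT, matT, ← blockDiagonal_mul]
  congr 1
  funext l
  exact sum_smul_sum_smul_of_mul_eq_one (M.mul_nonsing_inv hM) _ l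

theorem matT_idT : matT M (idT M m) = 1 := by
  rw [matT, ← blockDiagonal_one]
  congr 1
  funext l
  exact sum_smul_sum_smul_of_mul_eq_one (M.mul_nonsing_inv hM) _ l

theorem matT_mpow (A : Tensor m m p) (t : ℕ) : matT M (mpow M A t) = matT M A ^ t := by
  induction t with
  | zero => rw [mpow, matT_idT hM, pow_zero]
  | succ t ih => rw [mpow, matT_mprod hM, ih, pow_succ']

theorem matT_hyperpower (N : ℕ) (A : Tensor m n p) (Z : Tensor n m p) :
    matT M (mprod M Z (∑ k ∈ Finset.range N, mpow M (idT M m - mprod M A Z) k)) =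
      hyperpowerStep N (matT M A) (matT M Z) := by
  simp only [hyperpowerStep, matT_mprod hM, matT_sum, matT_mpow hM, matT_sub, matT_idT hM]

theorem sum_inv_smul_hatT (B : Tensor m n p) (l : Fin p) : ∑ s, M⁻¹ l s • hatT M B s = B l :=
  sum_smul_sum_smul_of_mul_eq_one (M.nonsing_inv_mul hM) B l

end Tensor

section Frobenius

attribute [local instance] Matrix.frobeniusNormedAddCommGroup Matrix.frobeniusNormedRing

variable {α β : Type*} [Fintype α] [Fintype β]

theorem frobNorm_nonneg (X : Matrix α β ℂ) : 0 ≤ frobNorm X :=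
  Real.sqrt_nonneg _

theorem frobNorm_eq_norm (X : Matrix α β ℂ) : frobNorm X = ‖X‖ := by
  rw [Matrix.frobenius_norm_def, frobNorm, Real.sqrt_eq_rpow]
  simp only [← Real.rpow_natCast, Nat.cast_ofNat]

theorem frobNorm_mul_pow_le [DecidableEq β] (X : Matrix α β ℂ) (E : Matrix β β ℂ) {k : ℕ}
    (hk : k ≠ 0) : frobNorm (X * E ^ k) ≤ frobNorm X * frobNorm E ^ k := by
  simp only [frobNorm_eq_norm]
  calc ‖X * E ^ k‖ ≤ ‖X‖ * ‖E ^ k‖ := Matrix.frobenius_norm_mul X (E ^ k)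
    _ ≤ ‖X‖ * ‖E‖ ^ k := by gcongr; exact norm_pow_le' E (Nat.pos_of_ne_zero hk)

theorem norm_apply_le_frobNorm (X : Matrix α β ℂ) (i : α) (j : β) : ‖X i j‖ ≤ frobNorm X := by
  refine Real.le_sqrt_of_sq_le ?_
  calc ‖X i j‖ ^ 2 ≤ ∑ j', ‖X i j'‖ ^ 2 :=
        Finset.single_le_sum (f := fun j' => ‖X i j'‖ ^ 2) (fun _ _ => sq_nonneg _)
          (Finset.mem_univ j)
    _ ≤ ∑ i', ∑ j', ‖X i' j'‖ ^ 2 :=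
        Finset.single_le_sum (f := fun i' => ∑ j', ‖X i' j'‖ ^ 2)
          (fun _ _ => Finset.sum_nonneg fun _ _ => sq_nonneg _) (Finset.mem_univ i)

end Frobenius

theorem norm_apply_le_frobNorm_matT {m n p : ℕ} {M : Matrix (Fin p) (Fin p) ℂ}
    (hM : IsUnit M.det) (B : Tensor m n p) (l : Fin p) (i : Fin m) (j : Fin n) :
    ‖B l i j‖ ≤ (∑ s, ‖M⁻¹ l s‖) * frobNorm (matT M B) := by
  have hentry : ∀ s, hatT M B s i j = matT M B (i, s) (j, s) := fun s =>
    (blockDiagonal_apply_eq _ i j s).symm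
  calc ‖B l i j‖ = ‖∑ s, M⁻¹ l s * matT M B (i, s) (j, s)‖ := by
        simp only [← hentry, ← sum_inv_smul_hatT hM B l, Matrix.sum_apply, Matrix.smul_apply,
          smul_eq_mul]
    _ ≤ ∑ s, ‖M⁻¹ l s‖ * frobNorm (matT M B) := by
        refine (norm_sum_le _ _).trans (Finset.sum_le_sum fun s _ => ?_)
        rw [norm_mul]
        gcongr
        exact norm_apply_le_frobNorm _ _ _
    _ = (∑ s, ‖M⁻¹ l s‖) * frobNorm (matT M B) := (Finset.sum_mul _ _ _).symm

theorem tendsto_apply_of_tendsto_frobNorm_matT_sub {m n p : ℕ} {M : Matrix (Fin p) (Fin p) ℂ}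
    (hM : IsUnit M.det) {X : Tensor m n p} {Z : ℕ → Tensor m n p}
    (h : Filter.Tendsto (fun t => frobNorm (matT M (X - Z t))) Filter.atTop (nhds 0))
    (l : Fin p) (i : Fin m) (j : Fin n) :
    Filter.Tendsto (fun t => Z t l i j) Filter.atTop (nhds (X l i j)) := by
  rw [tendsto_iff_norm_sub_tendsto_zero]
  refine squeeze_zero (fun _ => norm_nonneg _) (fun t => ?_)
    (by simpa using h.const_mul (∑ s, ‖M⁻¹ l s‖))
  rw [norm_sub_rev]
  exact norm_apply_le_frobNorm_matT hM (X - Z t) l i j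

theorem hpi19_convergence_general {m n p : ℕ}
    (M : Matrix (Fin p) (Fin p) ℂ) (hM : IsUnit M.det)
    (A : Tensor m n p) (W X : Tensor n m p)
    (hout : mprod M X (mprod M A X) = X)
    (hRX : rangeM M X = rangeM M W) (hNX : kerM M X = kerM M W)
    (γ : ℂ) (Z : ℕ → Tensor n m p)
    (hZ0 : Z 0 = γ • W)
    (hZ : ∀ j, Z (j + 1) =
      mprod M (Z j) (∑ k ∈ Finset.range 19, mpow M (idT M m - mprod M A (Z j)) k))
    (hinit : frobNorm (matT M (mprod M A X - mprod M A (Z 0))) < 1) :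
    (∀ j, frobNorm (matT M (X - Z j)) ≤
        frobNorm (matT M X) *
          frobNorm (matT M (mprod M A X - mprod M A (Z 0))) ^ (19 ^ j)) ∧
      ∀ (l : Fin p) (i : Fin n) (j : Fin m),
        Filter.Tendsto (fun t => Z t l i j) Filter.atTop (nhds (X l i j)) := by
  have hX : matT M X * matT M A * matT M X = matT M X := by
    simpa [matT_mprod hM, Matrix.mul_assoc] using congrArg (matT M) hout
  have hXW := Matrix.mul_mul_eq_of_range_le hX hRX.ge
  have hWX := Matrix.mul_mul_eq_of_ker_le hX hNX.le
  have hXZ : matT M X * matT M A * matT M (Z 0) = matT M (Z 0) := by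
    rw [hZ0, matT_smul, Matrix.mul_smul, hXW]
  have hZX : matT M (Z 0) * matT M A * matT M X = matT M (Z 0) := by
    rw [hZ0, matT_smul, Matrix.smul_mul, Matrix.smul_mul, hWX]
  have herr (j : ℕ) : matT M (X - Z j) =
      matT M X * matT M (mprod M A X - mprod M A (Z 0)) ^ (19 ^ j) := by
    rw [matT_sub, matT_sub, matT_mprod hM, matT_mprod hM]
    exact Matrix.sub_hyperpower_eq (Z := fun j => matT M (Z j)) (by norm_num) hX hXZ hZX
      (fun j => by rw [hZ, matT_hyperpower hM]) j
  have hbound (j : ℕ) : frobNorm (matT M (X - Z j)) ≤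
      frobNorm (matT M X) * frobNorm (matT M (mprod M A X - mprod M A (Z 0))) ^ (19 ^ j) := by
    rw [herr]
    exact frobNorm_mul_pow_le _ _ (pow_ne_zero j (by norm_num))
  refine ⟨hbound, tendsto_apply_of_tendsto_frobNorm_matT_sub hM ?_⟩
  have hpow := (tendsto_pow_atTop_nhds_zero_of_lt_one (frobNorm_nonneg _) hinit).comp
    (tendsto_pow_atTop_atTop_of_one_lt (by norm_num : 1 < 19))
  exact squeeze_zero (fun _ => frobNorm_nonneg _) hbound (by simpa using hpow.const_mul _)

/-- Theorem 4.2 (convergence of M-HPI19): with initial guess `Z₀ = γ·W` and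
`‖mat(A *_M X − A *_M Z₀)‖_F < 1`, the iterates converge to the outer inverse `X`
with the stated error bound. -/
theorem hpi19_convergence {m n p : ℕ}
    (M : Matrix (Fin p) (Fin p) ℂ) (hM : IsUnit M.det)
    (A : Tensor m n p) (W X : Tensor n m p)
    (hr1 : rankM M (mprod M W A) = rankM M W) (hr2 : rankM M W ≤ rankM M A)
    (hout : mprod M X (mprod M A X) = X)
    (hRX : rangeM M X = rangeM M W) (hNX : kerM M X = kerM M W)
    (γ : ℂ) (Z : ℕ → Tensor n m p)
    (hZ0 : Z 0 = γ • W)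
    (hZ : ∀ j, Z (j + 1) =
      mprod M (Z j) (∑ k ∈ Finset.range 19, mpow M (idT M m - mprod M A (Z j)) k))
    (hinit : frobNorm (matT M (mprod M A X - mprod M A (Z 0))) < 1) :
    (∀ j, frobNorm (matT M (X - Z j)) ≤
        frobNorm (matT M X) *
          frobNorm (matT M (mprod M A X - mprod M A (Z 0))) ^ (19 ^ j)) ∧
      ∀ (l : Fin p) (i : Fin n) (j : Fin m),
        Filter.Tendsto (fun t => Z t l i j) Filter.atTop (nhds (X l i j)) :=
  hpi19_convergence_general M hM A W X hout hRX hNX γ Z hZ0 hZ hinit
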